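/- Let X be a bounded 𝒢₁-measurable random variable with E X = 0 and Y a bounded 𝒢₂-measurable random variable. Then |E[XY]| ≤ 2 ‖X‖_{L^∞} ‖Y‖_{L^∞} φ(𝒢₁, 𝒢₂). -/

import Mathlib

/-!
Conditioning on `G1` and using `∫ X = 0` gives `∫ X Y = ∫ X (E[Y | G1] - E Y)`, hence
`|∫ X Y| ≤ ‖X‖∞ ∫ |E[Y | G1] - E Y|`. Splitting the last integral along the `G1`-set
`s = {E[Y | G1] ≥ E Y}` turns it into `(∫_s Y - P(s) E Y) - (∫_sᶜ Y - P(sᶜ) E Y)`, and each of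
these is at most `2 φ ‖Y‖∞ P(·)`. That bound is the same argument with the roles of the σ-algebras
exchanged, applied to `1_A - P(A)` in place of `X`: splitting along a `G2`-set `B` leaves
`P(A ∩ B) - P(A) P(B)` and its complement analogue, each bounded by `φ P(A)` by definition of `φ`.
-/

open MeasureTheory
open scoped ENNReal

/-- The uniform (φ) mixing coefficient between two sub-σ-algebras. -/
noncomputable def phiMix {Ω : Type*} {m0 : MeasurableSpace Ω} (μ : Measure Ω)
    (G H : MeasurableSpace Ω) : ℝ :=
  sSup {x : ℝ | ∃ A B : Set Ω, MeasurableSet[G] A ∧ MeasurableSet[H] B ∧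
    0 < (μ A).toReal ∧ x = |(μ (A ∩ B)).toReal / (μ A).toReal - (μ B).toReal|}

section

variable {Ω : Type*} {m0 : MeasurableSpace Ω} {μ : Measure Ω}

lemma MeasureTheory.MemLp.ae_norm_le_toReal_eLpNorm_top {E : Type*} [NormedAddCommGroup E]
    {f : Ω → E} (hf : MemLp f ∞ μ) : ∀ᵐ ω ∂μ, ‖f ω‖ ≤ (eLpNorm f ∞ μ).toReal := by
  filter_upwards [ae_le_eLpNormEssSup (f := f)] with ω hω
  rw [eLpNorm_exponent_top]
  simpa using ENNReal.toReal_mono (eLpNorm_exponent_top (f := f) ▸ hf.eLpNorm_ne_top) hω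

section CondExp

variable {m : MeasurableSpace Ω}

lemma exists_integral_abs_condExp_eq (hm : m ≤ m0) [SigmaFinite (μ.trim hm)] {g : Ω → ℝ}
    (hg : Integrable g μ) :
    ∃ s, MeasurableSet[m] s ∧
      ∫ ω, |μ[g | m] ω| ∂μ = ∫ ω in s, g ω ∂μ - ∫ ω in sᶜ, g ω ∂μ := by
  set s := {ω | 0 ≤ μ[g | m] ω}
  have hs : MeasurableSet[m] s :=
    measurableSet_le measurable_const stronglyMeasurable_condExp.measurable
  refine ⟨s, hs, ?_⟩
  rw [← integral_add_compl (hm s hs) integrable_condExp.abs,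
    setIntegral_congr_fun (hm s hs) (fun ω (hω : 0 ≤ μ[g | m] ω) => abs_of_nonneg hω),
    setIntegral_congr_fun (hm s hs).compl
      (fun ω (hω : ¬ 0 ≤ μ[g | m] ω) => abs_of_neg (not_le.mp hω)),
    integral_neg, setIntegral_condExp hm hg hs, setIntegral_condExp hm hg hs.compl, sub_eq_add_neg]

lemma abs_integral_mul_le_mul_integral_abs_condExp [IsFiniteMeasure μ] (hm : m ≤ m0)
    {f g : Ω → ℝ} (hf : StronglyMeasurable[m] f) {K : ℝ} (hfK : ∀ᵐ ω ∂μ, |f ω| ≤ K)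
    (hg : Integrable g μ) :
    |∫ ω, f ω * g ω ∂μ| ≤ K * ∫ ω, |μ[g | m] ω| ∂μ := by
  have hpull : ∫ ω, f ω * g ω ∂μ = ∫ ω, f ω * μ[g | m] ω ∂μ := by
    rw [← integral_condExp (f := fun ω => f ω * g ω) hm]
    exact integral_congr_ae (condExp_stronglyMeasurable_mul_of_bound hm hf hg K hfK)
  rw [hpull, ← integral_const_mul, ← Real.norm_eq_abs]
  refine norm_integral_le_of_norm_le ((integrable_condExp (m := m) (f := g)).abs.const_mul K) ?_
  filter_upwards [hfK] with ω hω
  rw [norm_mul, Real.norm_eq_abs, Real.norm_eq_abs]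
  exact mul_le_mul_of_nonneg_right hω (abs_nonneg _)

lemma exists_measurableSet_abs_integral_mul_le [IsFiniteMeasure μ] (hm : m ≤ m0)
    {f g : Ω → ℝ} (hf : StronglyMeasurable[m] f) {K : ℝ} (hfK : ∀ᵐ ω ∂μ, |f ω| ≤ K)
    (hg : Integrable g μ) :
    ∃ s, MeasurableSet[m] s ∧
      |∫ ω, f ω * g ω ∂μ| ≤ K * (∫ ω in s, g ω ∂μ - ∫ ω in sᶜ, g ω ∂μ) := by
  obtain ⟨s, hs, heq⟩ := exists_integral_abs_condExp_eq hm hg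
  exact ⟨s, hs, heq ▸ abs_integral_mul_le_mul_integral_abs_condExp hm hf hfK hg⟩

end CondExp

section PhiMix

variable [IsProbabilityMeasure μ] {G1 G2 : MeasurableSpace Ω}

lemma bddAbove_phiMix_set : BddAbove {x : ℝ | ∃ A B : Set Ω, MeasurableSet[G1] A ∧
    MeasurableSet[G2] B ∧ 0 < (μ A).toReal ∧
    x = |(μ (A ∩ B)).toReal / (μ A).toReal - (μ B).toReal|} := by
  refine ⟨1, ?_⟩
  rintro x ⟨A, B, -, -, hA, rfl⟩
  have hcond : (μ (A ∩ B)).toReal / (μ A).toReal ≤ 1 :=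
    div_le_one_of_le₀ (measureReal_mono Set.inter_subset_left) hA.le
  have hcond0 : 0 ≤ (μ (A ∩ B)).toReal / (μ A).toReal := by positivity
  have hB : (μ B).toReal ≤ 1 := measureReal_le_one
  have hB0 : 0 ≤ (μ B).toReal := ENNReal.toReal_nonneg
  exact abs_sub_le_iff.2 ⟨by linarith, by linarith⟩

lemma abs_measureReal_inter_sub_mul_le_phiMix {A B : Set Ω} (hA : MeasurableSet[G1] A)
    (hB : MeasurableSet[G2] B) :
    |μ.real (A ∩ B) - μ.real A * μ.real B| ≤ phiMix μ G1 G2 * μ.real A := by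
  rcases (measureReal_nonneg (μ := μ) (s := A)).eq_or_lt with hA0 | hApos
  · have hAB0 : μ.real (A ∩ B) = 0 := measureReal_mono_null Set.inter_subset_left hA0.symm
    simp [← hA0, hAB0]
  · have hmem : |μ.real (A ∩ B) / μ.real A - μ.real B| ≤ phiMix μ G1 G2 :=
      le_csSup bddAbove_phiMix_set ⟨A, B, hA, hB, hApos, rfl⟩
    calc |μ.real (A ∩ B) - μ.real A * μ.real B|
        = |μ.real (A ∩ B) / μ.real A - μ.real B| * μ.real A := by
          rw [← abs_of_pos hApos, ← abs_mul, abs_of_pos hApos, sub_mul,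
            div_mul_cancel₀ _ hApos.ne', mul_comm]
      _ ≤ phiMix μ G1 G2 * μ.real A := mul_le_mul_of_nonneg_right hmem hApos.le

lemma abs_setIntegral_sub_measureReal_mul_integral_le (hG1 : G1 ≤ m0) (hG2 : G2 ≤ m0)
    {A : Set Ω} (hA : MeasurableSet[G1] A) {Y : Ω → ℝ} (hY : StronglyMeasurable[G2] Y) {M : ℝ}
    (hYM : ∀ᵐ ω ∂μ, |Y ω| ≤ M) :
    |∫ ω in A, Y ω ∂μ - μ.real A * ∫ ω, Y ω ∂μ| ≤ 2 * phiMix μ G1 G2 * M * μ.real A := by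
  have hAm : MeasurableSet[m0] A := hG1 A hA
  set g : Ω → ℝ := fun ω => A.indicator (fun _ => (1 : ℝ)) ω - μ.real A
  have hg : Integrable g μ := ((integrable_const 1).indicator hAm).sub (integrable_const _)
  have hYint : Integrable Y μ := .of_bound (hY.mono hG2).aestronglyMeasurable M hYM
  have hM : 0 ≤ M := hYM.exists.elim fun ω hω => (abs_nonneg _).trans hω
  have hYg : ∫ ω, Y ω * g ω ∂μ = ∫ ω in A, Y ω ∂μ - μ.real A * ∫ ω, Y ω ∂μ := by
    have hpt : ∀ ω, Y ω * g ω = A.indicator Y ω - Y ω * μ.real A := fun ω => by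
      by_cases hω : ω ∈ A <;> simp [g, hω, mul_sub]
    rw [integral_congr_ae (ae_of_all _ hpt),
      integral_sub (hYint.indicator hAm) (hYint.mul_const _), integral_indicator hAm,
      integral_mul_const, mul_comm]
  have hgs : ∀ s, ∫ ω in s, g ω ∂μ = μ.real (A ∩ s) - μ.real A * μ.real s := fun s => by
    rw [integral_sub ((integrable_const 1).indicator hAm) (integrable_const _),
      setIntegral_indicator hAm, setIntegral_const, setIntegral_const,
      smul_eq_mul, smul_eq_mul, mul_one, Set.inter_comm, mul_comm]
  obtain ⟨s, hs, hbound⟩ := exists_measurableSet_abs_integral_mul_le hG2 hY hYM hg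
  have hAs := abs_measureReal_inter_sub_mul_le_phiMix (μ := μ) hA hs
  have hAsc := abs_measureReal_inter_sub_mul_le_phiMix (μ := μ) hA hs.compl
  calc |∫ ω in A, Y ω ∂μ - μ.real A * ∫ ω, Y ω ∂μ|
      = |∫ ω, Y ω * g ω ∂μ| := by rw [hYg]
    _ ≤ M * (∫ ω in s, g ω ∂μ - ∫ ω in sᶜ, g ω ∂μ) := hbound
    _ ≤ M * (2 * phiMix μ G1 G2 * μ.real A) := by
      gcongr
      rw [hgs, hgs]
      linarith [(abs_le.1 hAs).2, (abs_le.1 hAsc).1]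
    _ = 2 * phiMix μ G1 G2 * M * μ.real A := by ring

theorem abs_integral_mul_le_two_mul_phiMix (hG1 : G1 ≤ m0) (hG2 : G2 ≤ m0) {X Y : Ω → ℝ}
    (hX : StronglyMeasurable[G1] X) (hY : StronglyMeasurable[G2] Y) {K M : ℝ}
    (hXK : ∀ᵐ ω ∂μ, |X ω| ≤ K) (hYM : ∀ᵐ ω ∂μ, |Y ω| ≤ M) (hmean : ∫ ω, X ω ∂μ = 0) :
    |∫ ω, X ω * Y ω ∂μ| ≤ 2 * K * M * phiMix μ G1 G2 := by
  have hXint : Integrable X μ := .of_bound (hX.mono hG1).aestronglyMeasurable K hXK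
  have hYint : Integrable Y μ := .of_bound (hY.mono hG2).aestronglyMeasurable M hYM
  have hK : 0 ≤ K := hXK.exists.elim fun ω hω => (abs_nonneg _).trans hω
  set g : Ω → ℝ := fun ω => Y ω - ∫ ω, Y ω ∂μ
  have hXg : ∫ ω, X ω * g ω ∂μ = ∫ ω, X ω * Y ω ∂μ := by
    simp_rw [g, mul_sub]
    rw [integral_sub (hXint.mul_bdd (hY.mono hG2).aestronglyMeasurable hYM) (hXint.mul_const _),
      integral_mul_const, hmean, zero_mul, sub_zero]
  have hgs : ∀ s, ∫ ω in s, g ω ∂μ = ∫ ω in s, Y ω ∂μ - μ.real s * ∫ ω, Y ω ∂μ := fun s => by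
    rw [integral_sub hYint.integrableOn (integrable_const _), setIntegral_const, smul_eq_mul]
  obtain ⟨s, hs, hbound⟩ :=
    exists_measurableSet_abs_integral_mul_le hG1 hX hXK (hYint.sub (integrable_const _))
  have hYs := abs_setIntegral_sub_measureReal_mul_integral_le hG1 hG2 hs hY hYM
  have hYsc := abs_setIntegral_sub_measureReal_mul_integral_le hG1 hG2 hs.compl hY hYM
  calc |∫ ω, X ω * Y ω ∂μ|
      = |∫ ω, X ω * g ω ∂μ| := by rw [hXg]
    _ ≤ K * (∫ ω in s, g ω ∂μ - ∫ ω in sᶜ, g ω ∂μ) := hbound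
    _ ≤ K * (2 * phiMix μ G1 G2 * M * (μ.real s + μ.real sᶜ)) := by
      gcongr
      rw [hgs, hgs]
      linarith [(abs_le.1 hYs).2, (abs_le.1 hYsc).1]
    _ = 2 * K * M * phiMix μ G1 G2 := by
      rw [probReal_add_probReal_compl (hG1 s hs)]
      ring

end PhiMix

end

theorem stmt4 {Ω : Type*} [m0 : MeasurableSpace Ω] (μ : Measure Ω) [IsProbabilityMeasure μ]
    (G1 G2 : MeasurableSpace Ω) (hG1 : G1 ≤ m0) (hG2 : G2 ≤ m0)
    (X Y : Ω → ℝ) (hX : Measurable[G1] X) (hY : Measurable[G2] Y)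
    (hXb : MemLp X ⊤ μ) (hYb : MemLp Y ⊤ μ)
    (hmean : ∫ ω, X ω ∂μ = 0) :
    |∫ ω, X ω * Y ω ∂μ| ≤
      2 * (eLpNorm X ⊤ μ).toReal * (eLpNorm Y ⊤ μ).toReal * phiMix μ G1 G2 :=
  abs_integral_mul_le_two_mul_phiMix hG1 hG2 hX.stronglyMeasurable hY.stronglyMeasurable
    hXb.ae_norm_le_toReal_eLpNorm_top hYb.ae_norm_le_toReal_eLpNorm_top hmean
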